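/- Let A be an m×n dual complex matrix and N_A an NDMPI of A. If X is an n×m dual complex matrix satisfying A·X·A = A·N_A·A, X·A·X = X, and (A·X)* = A·X (i.e., X is a {1,2,3}-inverse of A), then A·X = A·N_A. -/

import Mathlib

open Matrix

/-- The dual complex numbers ℂ[ε] with ε² = 0 (dual numbers over ℂ). -/
abbrev DualComplex := DualNumber ℂ

/-- Conjugation on dual complex numbers: star (a + b·ε) = (conj a) + (conj b)·ε. -/
noncomputable instance : StarRing DualComplex where
  star x := ⟨star x.fst, star x.snd⟩
  star_involutive x := TrivSqZeroExt.ext (star_star x.fst) (star_star x.snd)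
  star_mul x y := TrivSqZeroExt.ext
    (by simp [TrivSqZeroExt.fst_mul, mul_comm]; exact mul_comm _ _)
    (by simp [TrivSqZeroExt.snd_mul]; exact Eq.trans (b := star y.fst * star x.snd + star y.snd * star x.fst) (by simp; ring) rfl)
  star_add x y := TrivSqZeroExt.ext (by simp; rfl) (by simp; rfl)

/-- `X` is a new dual Moore–Penrose inverse (NDMPI) of `M`:
`M*·M·X·M·M* = M*·M·M*`, `X·M·X = X`, `(M·X)* = M·X`, `(X·M)* = X·M`. -/
def IsNDMPI {m n : ℕ} (M : Matrix (Fin m) (Fin n) DualComplex)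
    (X : Matrix (Fin n) (Fin m) DualComplex) : Prop :=
  Mᴴ * M * X * M * Mᴴ = Mᴴ * M * Mᴴ ∧
  X * M * X = X ∧
  (M * X)ᴴ = M * X ∧
  (X * M)ᴴ = X * M

/-! `A·X` and `A·N_A` agree on the columns of `A`, so each absorbs the other from the left;
two self-adjoint elements that absorb each other in this way are equal. -/

theorem IsSelfAdjoint.eq_of_mul_eq_of_mul_eq {S : Type*} [Mul S] [StarMul S] {p q : S}
    (hp : IsSelfAdjoint p) (hq : IsSelfAdjoint q) (hqp : q * p = p) (hpq : p * q = q) :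
    p = q :=
  calc p = star (q * p) := by rw [hqp, hp.star_eq]
    _ = p * q := by rw [star_mul, hp.star_eq, hq.star_eq]
    _ = q := hpq

theorem Matrix.mul_mul_mul_mul_eq_of_mul_mul_eq {m n R : Type*} [Fintype m] [Fintype n]
    [Semiring R] {A : Matrix m n R} {X Y : Matrix n m R}
    (hX : X * A * X = X) (hXY : A * X * A = A * Y * A) :
    A * Y * (A * X) = A * X :=
  calc A * Y * (A * X) = A * X * A * X := by rw [hXY, Matrix.mul_assoc (A * Y)]
    _ = A * X := by rw [Matrix.mul_assoc (A * X), Matrix.mul_assoc, ← Matrix.mul_assoc X, hX]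

/-- If `X` is a {1,2,3}-inverse of `A` (i.e. `A·X·A = A_e`, `X·A·X = X`,
`(A·X)* = A·X`), then `A·X = A·N_A`. -/
theorem stmt_12 {m n : ℕ} (A : Matrix (Fin m) (Fin n) DualComplex)
    (NA : Matrix (Fin n) (Fin m) DualComplex) (hNA : IsNDMPI A NA)
    (X : Matrix (Fin n) (Fin m) DualComplex)
    (h1 : A * X * A = A * NA * A)
    (h2 : X * A * X = X)
    (h3 : (A * X)ᴴ = A * X) :
    A * X = A * NA := by
  obtain ⟨-, hNA2, hNA3, -⟩ := hNA
  exact IsSelfAdjoint.eq_of_mul_eq_of_mul_eq h3 hNA3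
    (mul_mul_mul_mul_eq_of_mul_mul_eq h2 h1) (mul_mul_mul_mul_eq_of_mul_mul_eq hNA2 h1.symm)
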